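/- Let X, Y take values in ℝ^q with the Euclidean metric, with marginals ν_X, ν_Y having finite first moments, and suppose E[|X|² + |Y|²] < ∞. Then the formula E[d_{ν_X}(X, X') d_{ν_Y}(Y, Y')] (with (X', Y') an independent copy of (X, Y)) equals E|X − X'||Y − Y'| + E|X − X'| · E|Y − Y''| − 2 E|X − X'||Y − Y''|, where (X', Y') and (X'', Y'') are independent copies of (X, Y). -/

import Mathlib

/-!
Write `a s = ∫ t, f s t` and `A = ∬ f` for a symmetric kernel `f`, so that its double centering
is `f s t + c s + c t` with `c = A / 2 - a`. The rows of a double centering integrate to zero, so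
by Fubini it is orthogonal to every function of one coordinate. Hence in `∬ F G` only
`∬ f G = ∬ f g - 2 ∫ a b + A B` survives, and `∫ a b` is the triple integral
`E ‖X - X'‖ ‖Y - Y''‖`, again by Fubini. Every product that occurs is integrable because the
kernels are dominated by `u s + u t` with `u ∈ L²`; for `‖X s - X t‖` take `u = ‖X‖`.
-/

open MeasureTheory Function

section DoubleCentering

variable {S : Type*} [MeasurableSpace S] {μ : Measure S}

theorem integral_uncurry_mul_fst [SFinite μ] {K : S → S → ℝ} {h : S → ℝ}
    (hKh : Integrable (fun p : S × S => K p.1 p.2 * h p.1) (μ.prod μ)) :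
    ∫ p, K p.1 p.2 * h p.1 ∂(μ.prod μ) = ∫ s, (∫ t, K s t ∂μ) * h s ∂μ := by
  simp only [integral_prod _ hKh, integral_mul_const]

theorem integral_uncurry_mul_snd_of_comm [SFinite μ] {K : S → S → ℝ}
    (hK : ∀ s t, K s t = K t s) {h : S → ℝ}
    (hKh : Integrable (fun p : S × S => K p.1 p.2 * h p.2) (μ.prod μ)) :
    ∫ p, K p.1 p.2 * h p.2 ∂(μ.prod μ) = ∫ s, (∫ t, K s t ∂μ) * h s ∂μ := by
  have hswap : (fun p : S × S => K p.2 p.1 * h p.1) = fun p => K p.1 p.2 * h p.1 :=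
    funext fun p => by rw [hK]
  rw [← integral_prod_swap, ← integral_uncurry_mul_fst (hswap ▸ hKh.swap)]
  exact congrArg _ hswap

theorem integral_uncurry_mul_add_fst_add_snd [IsProbabilityMeasure μ] {K L : S → S → ℝ}
    {c : S → ℝ} (hK : MemLp (uncurry K) 2 (μ.prod μ)) (hKs : ∀ s t, K s t = K t s)
    (hL : MemLp (uncurry L) 2 (μ.prod μ)) (hc : MemLp c 2 μ) :
    ∫ p, K p.1 p.2 * (L p.1 p.2 + c p.1 + c p.2) ∂(μ.prod μ)
      = ∫ p, K p.1 p.2 * L p.1 p.2 ∂(μ.prod μ) + 2 * ∫ s, (∫ t, K s t ∂μ) * c s ∂μ := by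
  have hKL : Integrable (fun p : S × S => K p.1 p.2 * L p.1 p.2) (μ.prod μ) :=
    hK.integrable_mul hL
  have hKc₁ : Integrable (fun p : S × S => K p.1 p.2 * c p.1) (μ.prod μ) :=
    hK.integrable_mul (hc.comp_measurePreserving measurePreserving_fst)
  have hKc₂ : Integrable (fun p : S × S => K p.1 p.2 * c p.2) (μ.prod μ) :=
    hK.integrable_mul (hc.comp_measurePreserving measurePreserving_snd)
  have hKLc₁ : Integrable (fun p : S × S => K p.1 p.2 * L p.1 p.2 + K p.1 p.2 * c p.1)
      (μ.prod μ) := hKL.add hKc₁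
  simp only [mul_add]
  rw [integral_add hKLc₁ hKc₂, integral_add hKL hKc₁, integral_uncurry_mul_fst hKc₁,
    integral_uncurry_mul_snd_of_comm hKs hKc₂]
  ring

theorem integral_prod_prod_eq_integral_mul_integral [IsProbabilityMeasure μ] {f g : S → S → ℝ}
    (hf : MemLp (uncurry f) 2 (μ.prod μ)) (hg : MemLp (uncurry g) 2 (μ.prod μ)) :
    ∫ p, f p.1 p.2.1 * g p.1 p.2.2 ∂(μ.prod (μ.prod μ))
      = ∫ s, (∫ t, f s t ∂μ) * (∫ t, g s t ∂μ) ∂μ := by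
  have hfg : Integrable (fun p : S × S × S => f p.1 p.2.1 * g p.1 p.2.2) (μ.prod (μ.prod μ)) :=
    (hf.comp_measurePreserving ((MeasurePreserving.id μ).prod measurePreserving_fst)).integrable_mul
      (hg.comp_measurePreserving ((MeasurePreserving.id μ).prod measurePreserving_snd))
  rw [integral_prod _ hfg]
  exact integral_congr_ae (ae_of_all _ fun s => integral_prod_mul (f s) (g s))

structure IsL2DominatedKernel (μ : Measure S) (f : S → S → ℝ) : Prop where
  measurable : Measurable (uncurry f)
  exists_abs_le : ∃ u : S → ℝ, MemLp u 2 μ ∧ ∀ s t, |f s t| ≤ u s + u t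

namespace IsL2DominatedKernel

variable {f : S → S → ℝ}

theorem memLp_uncurry [IsProbabilityMeasure μ] (hf : IsL2DominatedKernel μ f) :
    MemLp (uncurry f) 2 (μ.prod μ) := by
  obtain ⟨u, hu, hfu⟩ := hf.exists_abs_le
  have hu₁ : MemLp (fun p : S × S => u p.1) 2 (μ.prod μ) :=
    hu.comp_measurePreserving measurePreserving_fst
  have hu₂ : MemLp (fun p : S × S => u p.2) 2 (μ.prod μ) :=
    hu.comp_measurePreserving measurePreserving_snd
  refine (hu₁.add hu₂).of_le hf.measurable.aestronglyMeasurable (ae_of_all _ fun p => ?_)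
  exact (hfu p.1 p.2).trans (le_abs_self _)

theorem integrable_uncurry [IsProbabilityMeasure μ] (hf : IsL2DominatedKernel μ f) :
    Integrable (uncurry f) (μ.prod μ) :=
  hf.memLp_uncurry.integrable one_le_two

theorem integrable_apply [IsFiniteMeasure μ] (hf : IsL2DominatedKernel μ f) (s : S) :
    Integrable (f s) μ := by
  obtain ⟨u, hu, hfu⟩ := hf.exists_abs_le
  exact ((integrable_const (u s)).add (hu.integrable one_le_two)).mono'
    (hf.measurable.comp measurable_prodMk_left).aestronglyMeasurable (ae_of_all _ (hfu s))

theorem memLp_integral_right [IsProbabilityMeasure μ] (hf : IsL2DominatedKernel μ f) :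
    MemLp (fun s => ∫ t, f s t ∂μ) 2 μ := by
  obtain ⟨u, hu, hfu⟩ := hf.exists_abs_le
  have hu₁ : Integrable u μ := hu.integrable one_le_two
  refine (hu.add (memLp_const (∫ t, u t ∂μ))).of_le
    hf.measurable.stronglyMeasurable.integral_prod_right'.aestronglyMeasurable
    (ae_of_all _ fun s => ?_)
  calc ‖∫ t, f s t ∂μ‖ ≤ ∫ t, u s + u t ∂μ :=
        norm_integral_le_of_norm_le ((integrable_const _).add hu₁) (ae_of_all _ (hfu s))
    _ = u s + ∫ t, u t ∂μ := by simp [integral_add (integrable_const _) hu₁]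
    _ ≤ ‖u s + ∫ t, u t ∂μ‖ := le_abs_self _

end IsL2DominatedKernel

theorem isL2DominatedKernel_norm_sub {E : Type*} [NormedAddCommGroup E] [MeasurableSpace E]
    [OpensMeasurableSpace E] [MeasurableSub₂ E] {X : S → E} (hX : Measurable X)
    (hX₂ : MemLp X 2 μ) : IsL2DominatedKernel μ (fun s t => ‖X s - X t‖) where
  measurable := ((hX.comp measurable_fst).sub (hX.comp measurable_snd)).norm
  exists_abs_le := ⟨fun s => ‖X s‖, hX₂.norm, fun s t => by
    rw [abs_norm]; exact norm_sub_le _ _⟩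

noncomputable def doubleCenter (μ : Measure S) (f : S → S → ℝ) (s t : S) : ℝ :=
  f s t - (∫ r, f s r ∂μ) - (∫ r, f t r ∂μ) + ∫ p, f p.1 p.2 ∂(μ.prod μ)

theorem doubleCenter_eq_add (f : S → S → ℝ) (s t : S) :
    doubleCenter μ f s t = f s t + ((∫ p, f p.1 p.2 ∂(μ.prod μ)) / 2 - ∫ r, f s r ∂μ)
      + ((∫ p, f p.1 p.2 ∂(μ.prod μ)) / 2 - ∫ r, f t r ∂μ) := by
  rw [doubleCenter]
  ring

theorem doubleCenter_comm {f : S → S → ℝ} (hf : ∀ s t, f s t = f t s) (s t : S) :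
    doubleCenter μ f s t = doubleCenter μ f t s := by
  simp only [doubleCenter, hf s t]
  ring

theorem integral_doubleCenter_right [IsProbabilityMeasure μ] {f : S → S → ℝ}
    (hf : IsL2DominatedKernel μ f) (s : S) : ∫ t, doubleCenter μ f s t ∂μ = 0 := by
  have ha := hf.memLp_integral_right.integrable one_le_two
  have h₁ : Integrable (fun t => f s t - ∫ r, f s r ∂μ) μ :=
    (hf.integrable_apply s).sub (integrable_const _)
  have h₂ : Integrable (fun t => f s t - (∫ r, f s r ∂μ) - ∫ r, f t r ∂μ) μ := h₁.sub ha
  simp only [doubleCenter]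
  rw [integral_add h₂ (integrable_const _), integral_sub h₁ ha,
    integral_sub (hf.integrable_apply s) (integrable_const _),
    integral_integral hf.integrable_uncurry]
  simp

theorem memLp_doubleCenter [IsProbabilityMeasure μ] {f : S → S → ℝ}
    (hf : IsL2DominatedKernel μ f) : MemLp (uncurry (doubleCenter μ f)) 2 (μ.prod μ) := by
  have ha := hf.memLp_integral_right
  exact ((hf.memLp_uncurry.sub (ha.comp_measurePreserving measurePreserving_fst)).sub
    (ha.comp_measurePreserving measurePreserving_snd)).add (memLp_const _)

theorem integral_doubleCenter_mul_doubleCenter [IsProbabilityMeasure μ] {f g : S → S → ℝ}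
    (hf : IsL2DominatedKernel μ f) (hfs : ∀ s t, f s t = f t s)
    (hg : IsL2DominatedKernel μ g) (hgs : ∀ s t, g s t = g t s) :
    ∫ p, doubleCenter μ f p.1 p.2 * doubleCenter μ g p.1 p.2 ∂(μ.prod μ)
      = ∫ p, f p.1 p.2 * g p.1 p.2 ∂(μ.prod μ)
        + (∫ p, f p.1 p.2 ∂(μ.prod μ)) * (∫ p, g p.1 p.2 ∂(μ.prod μ))
        - 2 * ∫ s, (∫ t, f s t ∂μ) * (∫ t, g s t ∂μ) ∂μ := by
  set A := ∫ p, f p.1 p.2 ∂(μ.prod μ)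
  set B := ∫ p, g p.1 p.2 ∂(μ.prod μ)
  have ha := hf.memLp_integral_right
  have hb := hg.memLp_integral_right
  have hFG : ∫ p, doubleCenter μ f p.1 p.2 * doubleCenter μ g p.1 p.2 ∂(μ.prod μ)
      = ∫ p, f p.1 p.2 * doubleCenter μ g p.1 p.2 ∂(μ.prod μ) := by
    have hc : MemLp (fun s => A / 2 - ∫ t, f s t ∂μ) 2 μ := (memLp_const _).sub ha
    simp only [mul_comm _ (doubleCenter μ g _ _), doubleCenter_eq_add f]
    rw [integral_uncurry_mul_add_fst_add_snd (memLp_doubleCenter hg) (doubleCenter_comm hgs)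
      hf.memLp_uncurry hc]
    simp [integral_doubleCenter_right hg]
  have hfG : ∫ p, f p.1 p.2 * doubleCenter μ g p.1 p.2 ∂(μ.prod μ)
      = ∫ p, f p.1 p.2 * g p.1 p.2 ∂(μ.prod μ)
        + 2 * ∫ s, (∫ t, f s t ∂μ) * (B / 2 - ∫ t, g s t ∂μ) ∂μ := by
    have hd : MemLp (fun s => B / 2 - ∫ t, g s t ∂μ) 2 μ := (memLp_const _).sub hb
    simp only [doubleCenter_eq_add g]
    exact integral_uncurry_mul_add_fst_add_snd hf.memLp_uncurry hfs hg.memLp_uncurry hd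
  have hab : ∫ s, (∫ t, f s t ∂μ) * (B / 2 - ∫ t, g s t ∂μ) ∂μ
      = A * B / 2 - ∫ s, (∫ t, f s t ∂μ) * (∫ t, g s t ∂μ) ∂μ := by
    have haB : Integrable (fun s => (∫ t, f s t ∂μ) * (B / 2)) μ :=
      (ha.integrable one_le_two).mul_const _
    have hab : Integrable (fun s => (∫ t, f s t ∂μ) * ∫ t, g s t ∂μ) μ := ha.integrable_mul hb
    simp only [mul_sub]
    rw [integral_sub haB hab, integral_mul_const, integral_integral hf.integrable_uncurry]
    ring
  rw [hFG, hfG, hab]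
  ring

end DoubleCentering

/-- In Euclidean space, the metric-space definition of distance covariance by double centering
agrees with the Székely–Rizzo–Bakirov moment formula:
`E[d_{νX}(X,X') d_{νY}(Y,Y')] = E|X−X'||Y−Y'| + E|X−X'|·E|Y−Y''| − 2E|X−X'||Y−Y''|`. -/
theorem dcov_centered_eq_moment_formula (q : ℕ)
    {S : Type*} [MeasurableSpace S] (μ : Measure S) [IsProbabilityMeasure μ]
    (X Y : S → EuclideanSpace ℝ (Fin q)) (hX : Measurable X) (hY : Measurable Y)
    (hmomX : Integrable (fun s => ‖X s‖ ^ 2) μ)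
    (hmomY : Integrable (fun s => ‖Y s‖ ^ 2) μ)
    -- the doubly-centered distances with respect to the marginals of X and Y
    (dX dY : EuclideanSpace ℝ (Fin q) → EuclideanSpace ℝ (Fin q) → ℝ)
    (hdX : ∀ x x', dX x x' = ‖x - x'‖ - (∫ s, ‖x - X s‖ ∂μ) - (∫ s, ‖x' - X s‖ ∂μ)
        + ∫ p : S × S, ‖X p.1 - X p.2‖ ∂(μ.prod μ))
    (hdY : ∀ y y', dY y y' = ‖y - y'‖ - (∫ s, ‖y - Y s‖ ∂μ) - (∫ s, ‖y' - Y s‖ ∂μ)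
        + ∫ p : S × S, ‖Y p.1 - Y p.2‖ ∂(μ.prod μ)) :
    -- (X', Y') is the second coordinate of the product space (an independent copy of (X, Y)),
    -- (X'', Y'') is a third independent copy
    ∫ p : S × S, dX (X p.1) (X p.2) * dY (Y p.1) (Y p.2) ∂(μ.prod μ)
      = (∫ p : S × S, ‖X p.1 - X p.2‖ * ‖Y p.1 - Y p.2‖ ∂(μ.prod μ))
        + (∫ p : S × S, ‖X p.1 - X p.2‖ ∂(μ.prod μ))
            * (∫ p : S × S, ‖Y p.1 - Y p.2‖ ∂(μ.prod μ))
        - 2 * ∫ p : S × S × S, ‖X p.1 - X p.2.1‖ * ‖Y p.1 - Y p.2.2‖ ∂(μ.prod (μ.prod μ)) := by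
  have hf := isL2DominatedKernel_norm_sub hX
    ((memLp_two_iff_integrable_sq_norm hX.aestronglyMeasurable).2 hmomX)
  have hg := isL2DominatedKernel_norm_sub hY
    ((memLp_two_iff_integrable_sq_norm hY.aestronglyMeasurable).2 hmomY)
  have hnorm_comm (Z : S → EuclideanSpace ℝ (Fin q)) (s t : S) :
      ‖Z s - Z t‖ = ‖Z t - Z s‖ := norm_sub_rev _ _
  rw [integral_prod_prod_eq_integral_mul_integral hf.memLp_uncurry hg.memLp_uncurry,
    ← integral_doubleCenter_mul_doubleCenter hf (hnorm_comm X) hg (hnorm_comm Y)]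
  simp only [hdX, hdY, doubleCenter]
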